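/- arXiv:1512.01781 — 3 statements merged into one kernel-verified Lean document; each statement's English description precedes it below -/
import Mathlib

section
/- Let G = (V, E) be a multigraph that is the homomorphic image of a connected multigraph H = (W, F) of maximum degree at most k by an onto function φ : W → V. Then there exist a tree H' = (W', F') of maximum degree at most k and an onto function ψ : W' → V such that G is the homomorphic image of H' by ψ and, for every v ∈ V, the ψ-multiplicity |ψ⁻¹(v)| is at least the φ-multiplicity |φ⁻¹(v)|. In particular, every k-trail is the homomorphic image of a k-tree. -/
/-- A multigraph on vertex type `V`: a finite multiset of unordered pairs of
vertices (loops and parallel edges allowed). -/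
structure Multigraph (V : Type) where
  edges : Multiset (Sym2 V)

namespace Multigraph

open Classical in
/-- The degree of a vertex: number of edge-endpoints at `v`, a loop counting twice. -/
noncomputable def deg {V : Type} (G : Multigraph V) (v : V) : ℕ :=
  (G.edges.map fun e => if e = Sym2.diag v then 2 else if v ∈ e then 1 else 0).sum

/-- Adjacency in a multigraph. -/
def Adj {V : Type} (G : Multigraph V) (u v : V) : Prop := s(u, v) ∈ G.edges

/-- A multigraph is connected if it has a vertex and any two vertices are joined by a walk. -/
def Connected {V : Type} (G : Multigraph V) : Prop :=
  Nonempty V ∧ ∀ u v : V, Relation.ReflTransGen G.Adj u v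

open Classical in
/-- `G` is the homomorphic image of `H` by the onto function `φ`: for all `u v`,
the number of edges of `G` between `u` and `v` equals the number of edges of `H`
whose endpoints are mapped by `φ` to `{u, v}`. -/
def IsHomImage {V W : Type} (G : Multigraph V) (H : Multigraph W) (φ : W → V) : Prop :=
  Function.Surjective φ ∧
    ∀ u v : V, G.edges.count s(u, v) = (H.edges.map (Sym2.map φ)).count s(u, v)

/-- A tree: a connected multigraph with `|F| = |W| - 1`. -/
def IsTree {W : Type} (H : Multigraph W) : Prop :=
  Connected H ∧ Multiset.card H.edges + 1 = Nat.card W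

/-- A multigraph is a `k`-trail if it is the homomorphic image of a (finite)
connected multigraph of maximum degree at most `k`. -/
def IsKTrail {V : Type} (G : Multigraph V) (k : ℕ) : Prop :=
  ∃ (W : Type) (_ : Finite W) (H : Multigraph W) (φ : W → V),
    Connected H ∧ (∀ w, H.deg w ≤ k) ∧ IsHomImage G H φ

/-- `G` contains a `k`-trail if some submultiset `U` of its edges gives a `k`-trail `(V, U)`. -/
def ContainsKTrail {V : Type} (G : Multigraph V) (k : ℕ) : Prop :=
  ∃ U : Multiset (Sym2 V), U ≤ G.edges ∧ IsKTrail (Multigraph.mk U) k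

/-- `lam` is a feasible multiplicity vector for `G`. -/
def FeasibleMult {V : Type} (G : Multigraph V) (lam : V → ℕ) : Prop :=
  ∃ (W : Type) (_ : Finite W) (H : Multigraph W) (φ : W → V),
    Connected H ∧ IsHomImage G H φ ∧ ∀ v : V, Nat.card (φ ⁻¹' {v}) = lam v

end Multigraph

open Multigraph

/-! If a connected `H` is not a tree, it has an edge `uw` lying on a cycle: a loop, one of two
parallel edges, or a non-bridge of the underlying simple graph. Deleting `uw` keeps `H`
connected, and we put it back as a pendant edge from `u` to a new vertex mapped to `φ w`. This
keeps the image `G`, raises no degree, lowers no multiplicity, and lowers the excess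
`|F| + 1 - |W|` by one; repeat until the excess is zero. -/

namespace Sym2

lemma toMultiset_mk {α : Type*} (a b : α) : s(a, b).toMultiset = a ::ₘ {b} := rfl

lemma toMultiset_map {α β : Type*} (f : α → β) (z : Sym2 α) :
    (z.map f).toMultiset = z.toMultiset.map f := by
  induction z using Sym2.ind with
  | _ a b => rfl

end Sym2

namespace Multigraph

variable {V W : Type}

instance {H : Multigraph W} : Std.Symm H.Adj :=
  ⟨fun _ _ h => by rwa [Adj, Sym2.eq_swap]⟩

lemma Connected.erase [DecidableEq W] {H : Multigraph W} (hH : Connected H) {a b : W}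
    (hab : Relation.ReflTransGen (Multigraph.mk (H.edges.erase s(a, b))).Adj a b) :
    Connected ⟨H.edges.erase s(a, b)⟩ := by
  refine ⟨hH.1, fun x y => Relation.reflTransGen_closed (fun c d hcd => ?_) x y (hH.2 x y)⟩
  by_cases he : s(c, d) = s(a, b)
  · rcases Sym2.eq_iff.1 he with ⟨rfl, rfl⟩ | ⟨rfl, rfl⟩
    · exact hab
    · exact Std.Symm.symm _ _ hab
  · exact .single ((Multiset.mem_erase_of_ne he).2 hcd)

def toSimpleGraph (H : Multigraph W) : SimpleGraph W :=
  SimpleGraph.fromEdgeSet {e | e ∈ H.edges}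

lemma Connected.toSimpleGraph {H : Multigraph W} (hH : Connected H) :
    H.toSimpleGraph.Connected := by
  have := hH.1
  refine ⟨fun u v => (SimpleGraph.reachable_iff_reflTransGen u v).2 <|
    Relation.reflTransGen_closed (fun a b hab => ?_) u v (hH.2 u v)⟩
  by_cases hne : a = b
  · exact hne ▸ .refl
  · exact .single ((SimpleGraph.fromEdgeSet_adj _).2 ⟨hab, hne⟩)

lemma card_edgeSet_toSimpleGraph_le (H : Multigraph W) :
    Nat.card H.toSimpleGraph.edgeSet ≤ Multiset.card H.edges := by
  classical
  calc Nat.card H.toSimpleGraph.edgeSet ≤ Nat.card (H.edges.toFinset : Set (Sym2 W)) :=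
        Nat.card_mono (Finset.finite_toSet _) fun e he => by
          rw [toSimpleGraph, SimpleGraph.edgeSet_fromEdgeSet] at he
          exact Multiset.mem_toFinset.2 he.1
    _ ≤ Multiset.card H.edges := by
        rw [Nat.card_coe_set_eq, Set.ncard_coe_finset]
        exact Multiset.toFinset_card_le _

lemma card_edgeSet_toSimpleGraph {H : Multigraph W} (hloop : ∀ a, s(a, a) ∉ H.edges)
    (hnodup : H.edges.Nodup) : Nat.card H.toSimpleGraph.edgeSet = Multiset.card H.edges := by
  classical
  have hedges : H.toSimpleGraph.edgeSet = (H.edges.toFinset : Set (Sym2 W)) := by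
    ext e
    induction e using Sym2.ind with
    | _ a b =>
      simp only [toSimpleGraph, SimpleGraph.mem_edgeSet, SimpleGraph.fromEdgeSet_adj,
        Set.mem_ofPred_eq, Finset.mem_coe, Multiset.mem_toFinset, and_iff_left_iff_imp]
      rintro hab rfl
      exact hloop a hab
  rw [hedges, Nat.card_coe_set_eq, Set.ncard_coe_finset,
    Multiset.toFinset_card_of_nodup hnodup]

lemma Connected.card_le_card_edges_add_one [Finite W] {H : Multigraph W} (hH : Connected H) :
    Nat.card W ≤ Multiset.card H.edges + 1 :=
  hH.toSimpleGraph.card_vert_le_card_edgeSet_add_one.trans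
    (Nat.add_le_add_right H.card_edgeSet_toSimpleGraph_le 1)

lemma reflTransGen_erase_of_reachable [DecidableEq W] {H : Multigraph W} {a b x y : W}
    (h : (H.toSimpleGraph.deleteEdges {s(a, b)}).Reachable x y) :
    Relation.ReflTransGen (Multigraph.mk (H.edges.erase s(a, b))).Adj x y := by
  refine Relation.ReflTransGen.mono (fun c d hcd => ?_) _ _
    ((SimpleGraph.reachable_iff_reflTransGen x y).1 h)
  rw [SimpleGraph.deleteEdges_adj, toSimpleGraph, SimpleGraph.fromEdgeSet_adj,
    Set.mem_singleton_iff] at hcd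
  exact (Multiset.mem_erase_of_ne hcd.2).2 hcd.1.1

lemma Connected.exists_reflTransGen_erase [Finite W] [DecidableEq W] {H : Multigraph W}
    (hH : Connected H) (hcard : Nat.card W ≤ Multiset.card H.edges) :
    ∃ a b, s(a, b) ∈ H.edges ∧
      Relation.ReflTransGen (Multigraph.mk (H.edges.erase s(a, b))).Adj a b := by
  by_cases hloop : ∃ a, s(a, a) ∈ H.edges
  · obtain ⟨a, ha⟩ := hloop
    exact ⟨a, a, ha, .refl⟩
  by_cases hnodup : H.edges.Nodup
  · push Not at hloop
    have hcyclic : ¬ H.toSimpleGraph.IsAcyclic := fun hac => by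
      have := (SimpleGraph.isTree_iff_connected_and_card.1 ⟨hH.toSimpleGraph, hac⟩).2
      rw [card_edgeSet_toSimpleGraph hloop hnodup] at this
      omega
    rw [SimpleGraph.isAcyclic_iff_forall_adj_isBridge] at hcyclic
    push Not at hcyclic
    obtain ⟨a, b, hab, hbridge⟩ := hcyclic
    rw [SimpleGraph.isBridge_iff, not_not] at hbridge
    exact ⟨a, b, ((SimpleGraph.fromEdgeSet_adj _).1 hab).1,
      reflTransGen_erase_of_reachable hbridge⟩
  · obtain ⟨e, he⟩ : ∃ e, 1 < H.edges.count e := by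
      simpa [Multiset.nodup_iff_count_le_one] using hnodup
    induction e using Sym2.ind with
    | _ a b =>
      refine ⟨a, b, Multiset.count_pos.1 (by omega), .single ?_⟩
      rw [Adj, ← Multiset.count_pos, Multiset.count_erase_self]
      omega

lemma deg_eq_count_bind [DecidableEq W] (H : Multigraph W) (v : W) :
    H.deg v = (H.edges.bind Sym2.toMultiset).count v := by
  rw [deg, Multiset.count_bind]
  congr 1
  refine Multiset.map_congr rfl fun e _ => ?_
  induction e using Sym2.ind with
  | _ a b =>
    by_cases ha : a = v <;> by_cases hb : b = v <;>
      simp [Sym2.toMultiset_mk, Sym2.diag, ha, hb, Ne.symm]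

def detach [DecidableEq W] (H : Multigraph W) (u w : W) : Multigraph (Option W) :=
  ⟨s(some u, none) ::ₘ (H.edges.erase s(u, w)).map (Sym2.map some)⟩

section Detach

variable [DecidableEq W] {H : Multigraph W} {u w : W}

lemma card_edges_detach (huw : s(u, w) ∈ H.edges) :
    Multiset.card (H.detach u w).edges = Multiset.card H.edges := by
  rw [detach, Multiset.card_cons, Multiset.card_map, Multiset.card_erase_add_one huw]

lemma deg_detach_le (huw : s(u, w) ∈ H.edges) (x : Option W) :
    (H.detach u w).deg x ≤ H.deg (x.getD u) := by
  set R := (H.edges.erase s(u, w)).bind Sym2.toMultiset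
  have hH : H.edges.bind Sym2.toMultiset = u ::ₘ w ::ₘ R := by
    rw [← Multiset.cons_erase huw, Multiset.cons_bind, Sym2.toMultiset_mk, Multiset.cons_add,
      Multiset.singleton_add]
  have hD : (H.detach u w).edges.bind Sym2.toMultiset = some u ::ₘ none ::ₘ R.map some := by
    rw [detach, Multiset.cons_bind, Sym2.toMultiset_mk, Multiset.cons_add, Multiset.singleton_add,
      Multiset.bind_map, Multiset.map_bind]
    simp only [Sym2.toMultiset_map]
  rw [deg_eq_count_bind, deg_eq_count_bind, hH, hD]
  cases x with
  | none => simp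
  | some x =>
    rw [Multiset.count_cons, Multiset.count_cons, Multiset.count_map_eq_count' _ _
      (Option.some_injective _)]
    by_cases hx : x = u <;> simp [Multiset.count_cons, hx]

lemma Connected.detach (hH : Connected (Multigraph.mk (H.edges.erase s(u, w)))) :
    Connected (H.detach u w) := by
  have hhub : ∀ x, Relation.ReflTransGen (H.detach u w).Adj x (some u) := by
    rintro (_ | x)
    · exact .single (Std.Symm.symm (r := Adj _) _ _ (Multiset.mem_cons_self _ _))
    · refine Relation.ReflTransGen.lift some (fun a b hab => ?_) x u (hH.2 x u)
      exact Multiset.mem_cons_of_mem (Multiset.mem_map_of_mem (Sym2.map some) hab)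
  exact ⟨⟨none⟩, fun x y => (hhub x).trans (Std.Symm.symm _ _ (hhub y))⟩

lemma IsHomImage.detach {G : Multigraph V} {φ : W → V} (h : IsHomImage G H φ)
    (huw : s(u, w) ∈ H.edges) : IsHomImage G (H.detach u w) (fun x => x.elim (φ w) φ) := by
  have hmap : (H.detach u w).edges.map (Sym2.map fun x => x.elim (φ w) φ) =
      H.edges.map (Sym2.map φ) := by
    conv_rhs => rw [← Multiset.cons_erase huw]
    simp only [Multigraph.detach, Multiset.map_cons, Multiset.map_map, Function.comp_def,
      Sym2.map_map, Sym2.map_mk, Option.elim]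
  exact ⟨fun v => (h.1 v).elim fun x hx => ⟨some x, hx⟩, fun a b => by rw [h.2, hmap]⟩

end Detach

theorem IsHomImage.exists_isTree_of_card_edges_add_one_eq {G : Multigraph V} {k : ℕ} (n : ℕ)
    [Finite W] {H : Multigraph W} {φ : W → V} (hn : Multiset.card H.edges + 1 = Nat.card W + n)
    (hH : Connected H) (hdeg : ∀ w, H.deg w ≤ k) (h : IsHomImage G H φ) :
    ∃ (W' : Type) (_ : Finite W') (H' : Multigraph W') (ψ : W' → V),
      IsTree H' ∧ (∀ w, H'.deg w ≤ k) ∧ IsHomImage G H' ψ ∧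
      ∀ v, Nat.card (φ ⁻¹' {v}) ≤ Nat.card (ψ ⁻¹' {v}) := by
  induction n generalizing W with
  | zero => exact ⟨W, inferInstance, H, φ, ⟨hH, hn⟩, hdeg, h, fun _ => le_rfl⟩
  | succ n ih =>
    classical
    obtain ⟨u, w, huw, hcycle⟩ := hH.exists_reflTransGen_erase (by omega)
    obtain ⟨W', _, H', ψ, htree, hdeg', hψ, hmult⟩ :=
      ih (by rw [card_edges_detach huw, Finite.card_option]; omega) (hH.erase hcycle).detach
        (fun x => (deg_detach_le huw x).trans (hdeg _)) (h.detach huw)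
    refine ⟨W', inferInstance, H', ψ, htree, hdeg', hψ, fun v => le_trans ?_ (hmult v)⟩
    exact Nat.card_le_card_of_injective (fun x => ⟨some x.1, x.2⟩) fun a b hab =>
      Subtype.ext (Option.some_injective _ (congrArg Subtype.val hab))

end Multigraph

theorem kTrail_image_of_kTree_general {V W : Type} [Finite W] (k : ℕ)
    (G : Multigraph V) (H : Multigraph W) (φ : W → V)
    (hconn : Connected H) (hdeg : ∀ w : W, H.deg w ≤ k)
    (h : IsHomImage G H φ) :
    ∃ (W' : Type) (_ : Finite W') (H' : Multigraph W') (ψ : W' → V),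
      IsTree H' ∧ (∀ w : W', H'.deg w ≤ k) ∧ IsHomImage G H' ψ ∧
      ∀ v : V, Nat.card (φ ⁻¹' {v}) ≤ Nat.card (ψ ⁻¹' {v}) := by
  obtain ⟨n, hn⟩ := Nat.exists_eq_add_of_le hconn.card_le_card_edges_add_one
  exact h.exists_isTree_of_card_edges_add_one_eq n hn hconn hdeg

/-- Every `k`-trail is the homomorphic image of a `k`-tree: if `G` is the homomorphic
image of a connected multigraph `H` of maximum degree at most `k` by an onto `φ`,
then `G` is the homomorphic image of a tree of maximum degree at most `k` by some onto `ψ`,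
with `ψ`-multiplicities at least the `φ`-multiplicities. -/
theorem kTrail_image_of_kTree {V W : Type} [Finite V] [Finite W]
    (hV : 2 ≤ Nat.card V) (k : ℕ)
    (G : Multigraph V) (H : Multigraph W) (φ : W → V)
    (hconn : Connected H) (hdeg : ∀ w : W, H.deg w ≤ k)
    (h : IsHomImage G H φ) :
    ∃ (W' : Type) (_ : Finite W') (H' : Multigraph W') (ψ : W' → V),
      IsTree H' ∧ (∀ w : W', H'.deg w ≤ k) ∧ IsHomImage G H' ψ ∧
      ∀ v : V, Nat.card (φ ⁻¹' {v}) ≤ Nat.card (ψ ⁻¹' {v}) :=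
  kTrail_image_of_kTree_general k G H φ hconn hdeg h
end

section
/- Let G = (V, E) be a multigraph and let λ ∈ ℤ_{>0}^V be a feasible multiplicity vector for G. Then every vector λ' ∈ ℤ_{>0}^V with λ'(v) ≤ λ(v) for all v ∈ V is also a feasible multiplicity vector for G. -/
open Multigraph

open Function

namespace Multigraph

variable {V W W' : Type}

def map (f : W → W') (H : Multigraph W) : Multigraph W' :=
  ⟨H.edges.map (Sym2.map f)⟩

lemma Adj.map {H : Multigraph W} {u v : W} (f : W → W') (h : H.Adj u v) :
    (H.map f).Adj (f u) (f v) :=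
  Multiset.mem_map_of_mem (Sym2.map f) h

lemma Connected.map {H : Multigraph W} {f : W → W'} (hf : Surjective f) (hH : H.Connected) :
    (H.map f).Connected := by
  refine ⟨hH.1.map f, fun u' v' => ?_⟩
  obtain ⟨u, rfl⟩ := hf u'
  obtain ⟨v, rfl⟩ := hf v'
  exact (hH.2 u v).lift f fun _ _ => Adj.map f

lemma IsHomImage.map {G : Multigraph V} {H : Multigraph W} {φ : W → V} {ψ : W → W'}
    {φ' : W' → V} (hφ : φ' ∘ ψ = φ) (h : IsHomImage G H φ) :
    IsHomImage G (H.map ψ) φ' := by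
  subst hφ
  refine ⟨h.1.of_comp, fun u v => ?_⟩
  rw [h.2, Multigraph.map, Multiset.map_map]
  simp only [comp_def, Sym2.map_map]

end Multigraph

lemma exists_surjective_fin_of_le_card {α : Type} [Finite α] {n : ℕ} (hn : 0 < n)
    (h : n ≤ Nat.card α) : ∃ f : α → Fin n, Surjective f := by
  have : Nonempty (Fin n) := ⟨⟨0, hn⟩⟩
  let e : Fin n ↪ α := (Fin.castLEEmb h).trans (Finite.equivFin α).symm.toEmbedding
  exact ⟨invFun e, invFun_surjective e.injective⟩

lemma exists_surjective_factor_with_card_fiber {V W : Type} [Finite W] (φ : W → V) (μ : V → ℕ)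
    (hpos : ∀ v, 0 < μ v) (hle : ∀ v, μ v ≤ Nat.card (φ ⁻¹' {v})) :
    ∃ (W' : Type) (_ : Finite W') (ψ : W → W') (φ' : W' → V),
      Surjective ψ ∧ φ' ∘ ψ = φ ∧ ∀ v, Nat.card (φ' ⁻¹' {v}) = μ v := by
  choose s hs using fun v => exists_surjective_fin_of_le_card (hpos v) (hle v)
  let ψ : W → Σ v, Fin (μ v) := fun w => ⟨φ w, s (φ w) ⟨w, rfl⟩⟩
  have hψ : Surjective ψ := by
    rintro ⟨v, i⟩
    obtain ⟨⟨w, hw : φ w = v⟩, rfl⟩ := hs v i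
    subst hw
    exact ⟨w, rfl⟩
  refine ⟨_, Finite.of_surjective ψ hψ, ψ, Sigma.fst, hψ, rfl, fun v => ?_⟩
  exact (Nat.card_congr (Equiv.sigmaSubtype v)).trans (Nat.card_fin _)

theorem feasibleMult_downMonotone_general {V : Type}
    (G : Multigraph V) (lam lam' : V → ℕ)
    (hlam : FeasibleMult G lam)
    (hpos : ∀ v : V, 1 ≤ lam' v) (hle : ∀ v : V, lam' v ≤ lam v) :
    FeasibleMult G lam' := by
  obtain ⟨W, _, H, φ, hconn, hhom, hfib⟩ := hlam
  obtain ⟨W', _, ψ, φ', hψ, hcomp, hfib'⟩ :=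
    exists_surjective_factor_with_card_fiber φ lam' hpos fun v => hfib v ▸ hle v
  exact ⟨W', inferInstance, H.map ψ, φ', hconn.map hψ, hhom.map hcomp, hfib'⟩

/-- Feasible multiplicity vectors are down-monotone: if `lam` is a feasible
multiplicity vector for `G` and `1 ≤ lam' ≤ lam` componentwise, then `lam'` is also
a feasible multiplicity vector for `G`. -/
theorem feasibleMult_downMonotone {V : Type} [Finite V]
    (hV : 2 ≤ Nat.card V)
    (G : Multigraph V) (lam lam' : V → ℕ)
    (hlam : FeasibleMult G lam)
    (hpos : ∀ v : V, 1 ≤ lam' v) (hle : ∀ v : V, lam' v ≤ lam v) :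
    FeasibleMult G lam' :=
  feasibleMult_downMonotone_general G lam lam' hlam hpos hle
end

section
/- Let G = (V, E) be a connected multigraph. Then there exists a function f : 2^V → ℤ_{≥0} with f(∅) = 0 that is submodular and monotone, such that a vector μ ∈ ℤ_{≥0}^V is a feasible split vector for G if and only if Σ_{v ∈ S} μ(v) ≤ f(S) for every subset S ⊆ V. (In other words, the feasible split vectors of G are exactly the integral points of a polymatroid.) -/
open Multigraph

/-- `μ` is a feasible split vector for `G` if `μ + 1` is a feasible multiplicity vector. -/
def FeasibleSplit {V : Type} (G : Multigraph V) (μ : V → ℕ) : Prop :=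
  FeasibleMult G (fun v => μ v + 1)

/-!
The bound is `f(S) = r*(E(S))`, the rank in the cographic matroid of `G` of the multiset `E(S)` of
edges meeting `S`; explicitly `f(S) = |E(S)| + c(E) - c(E - E(S))`, where `c` counts connected
components on the full vertex set. A matroid rank composed with the union-preserving map
`S ↦ E(S)` is normalized, monotone and submodular.

Necessity: if `H` splits `G` with `μ(v) + 1` copies of each `v`, deleting from the connected `H`
the `|E(S)|` edges over `E(S)` leaves at most `1 + |E(S)|` components. On the other hand the copies
of the vertices of `S` become isolated, and every other component of `E - E(S)` is covered by a
component of `H`, which gives at least `∑_{v ∈ S} (μ(v) + 1) + c(E - E(S)) - |S|` components.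

Sufficiency, by induction on `∑ μ`: pick `v` with `μ(v) > 0` and the largest tight set `S₀ ∌ v`
(tight sets are closed under union by submodularity). If every edge `vu` avoiding `S₀` were a
bridge of `E - E(S₀)`, then `f(S₀ + v) = f(S₀)`, which the constraint at `S₀ + v` forbids. So one
such edge is no bridge; delete it, lower `μ(v)` by one (the constraints persist: sets containing
`v` lose at most one unit of rank, tight sets avoiding `v` lie in `S₀` and keep their rank), and
split off a new copy of `v` attached by that edge.
-/

theorem Nat.card_subtype_ne_add_one {Q : Type} [Finite Q] (c : Q) :
    Nat.card {q : Q // q ≠ c} + 1 = Nat.card Q := by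
  classical
  rw [← Nat.card_unique (α := {q // q = c}), add_comm, ← Nat.card_sum]
  exact Nat.card_congr (Equiv.sumCompl (· = c))

theorem Nat.card_add_card_compl_range {α β : Type} [Finite β] {f : α → β}
    (hf : Function.Injective f) : Nat.card α + Nat.card {b // b ∉ Set.range f} = Nat.card β := by
  classical
  rw [← Nat.card_range_of_injective hf, ← Nat.card_sum]
  exact Nat.card_congr (Equiv.sumCompl _)

theorem Set.ncard_preimage_eq_finsum_mem {W V : Type} [Finite W] [Finite V] (φ : W → V)
    (S : Set V) : (φ ⁻¹' S).ncard = ∑ᶠ v ∈ S, (φ ⁻¹' {v}).ncard := by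
  classical
  have := Fintype.ofFinite V
  rw [finsum_mem_eq_toFinset_sum, ← Set.coe_toFinset S, ← Nat.card_coe_set_eq,
    Finset.card_preimage_eq_sum_card_image_eq (fun _ _ => Set.toFinite _)]
  exact Finset.sum_congr (by simp) fun v _ => Nat.card_coe_set_eq (φ ⁻¹' {v})

theorem finsum_mem_update_of_notMem {α M : Type} [DecidableEq α] [AddCommMonoid M]
    {S : Set α} {v : α} (hv : v ∉ S) (μ : α → M) (k : M) :
    ∑ᶠ x ∈ S, Function.update μ v k x = ∑ᶠ x ∈ S, μ x :=
  finsum_mem_congr rfl fun _ hx => Function.update_of_ne (ne_of_mem_of_not_mem hx hv) _ _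

theorem finsum_mem_update_add_of_mem {α M : Type} [DecidableEq α] [AddCommMonoid M]
    {S : Set α} (hS : S.Finite) {v : α} (hv : v ∈ S) (μ : α → M) (k : M) :
    ∑ᶠ x ∈ S, Function.update μ v k x + μ v = ∑ᶠ x ∈ S, μ x + k := by
  have hvS : v ∉ S \ {v} := fun h => h.2 rfl
  rw [← Set.insert_sdiff_self_of_mem hv, finsum_mem_insert _ hvS hS.sdiff,
    finsum_mem_insert _ hvS hS.sdiff, finsum_mem_update_of_notMem hvS, Function.update_self]
  abel

section Tight

variable {α : Type} [Finite α] {f : Set α → ℕ} {μ : α → ℕ}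

theorem finsum_mem_union_eq_of_eq (hf : ∀ A B, f (A ∪ B) + f (A ∩ B) ≤ f A + f B)
    (hμ : ∀ S, ∑ᶠ x ∈ S, μ x ≤ f S) {A B : Set α} (hA : ∑ᶠ x ∈ A, μ x = f A)
    (hB : ∑ᶠ x ∈ B, μ x = f B) : ∑ᶠ x ∈ A ∪ B, μ x = f (A ∪ B) := by
  have := finsum_mem_union_inter (f := μ) A.toFinite B.toFinite
  have := hf A B
  have := hμ (A ∪ B)
  have := hμ (A ∩ B)
  omega

theorem exists_max_tight_notMem (hf : ∀ A B, f (A ∪ B) + f (A ∩ B) ≤ f A + f B) (hf₀ : f ∅ = 0)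
    (hμ : ∀ S, ∑ᶠ x ∈ S, μ x ≤ f S) (v : α) :
    ∃ S₀, v ∉ S₀ ∧ ∑ᶠ x ∈ S₀, μ x = f S₀ ∧
      ∀ S, v ∉ S → ∑ᶠ x ∈ S, μ x = f S → S ⊆ S₀ := by
  obtain ⟨S₀, -, ⟨hvS₀, hS₀⟩, hmax⟩ := Finite.exists_le_maximal
    (p := fun S : Set α => v ∉ S ∧ ∑ᶠ x ∈ S, μ x = f S) (a := ∅) ⟨id, by simp [hf₀]⟩
  refine ⟨S₀, hvS₀, hS₀, fun S hvS hS => ?_⟩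
  have := hmax ⟨fun h => h.elim hvS₀ hvS, finsum_mem_union_eq_of_eq hf hμ hS₀ hS⟩
    Set.subset_union_left
  exact Set.subset_union_right.trans this

end Tight

namespace Multigraph

section Components

variable {α : Type} {F F' : Multiset (Sym2 α)} {a b x y : α}

def Reachable (F : Multiset (Sym2 α)) : α → α → Prop :=
  Relation.ReflTransGen (Multigraph.mk F).Adj

theorem reachable_of_mem (h : s(a, b) ∈ F) : Reachable F a b :=
  .single h

theorem Reachable.symm (h : Reachable F a b) : Reachable F b a := by
  have : Std.Symm (Multigraph.mk F).Adj := ⟨fun _ _ h => by rwa [Adj, Sym2.eq_swap]⟩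
  exact Std.Symm.symm (r := Relation.ReflTransGen (Multigraph.mk F).Adj) _ _ h

theorem Reachable.mono (hF : F ≤ F') (h : Reachable F a b) : Reachable F' a b :=
  Relation.ReflTransGen.mono (fun _ _ h => Multiset.mem_of_le hF h) _ _ h

theorem Reachable.of_cons (h : Reachable (s(a, b) ::ₘ F) x y) :
    Reachable F x y ∨ Reachable F x a ∧ Reachable F b y ∨ Reachable F x b ∧ Reachable F a y := by
  induction h with
  | refl => exact .inl .refl
  | @tail z w _ hzw ih =>
    rcases Multiset.mem_cons.1 hzw with hzw | hzw
    · rcases Sym2.eq_iff.1 hzw with ⟨rfl, rfl⟩ | ⟨rfl, rfl⟩ <;>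
        rcases ih with ih | ⟨ih, -⟩ | ⟨ih, -⟩ <;> simp_all [Reachable, Relation.ReflTransGen.refl]
    · have hzw : Reachable F z w := reachable_of_mem hzw
      rcases ih with ih | ⟨h₁, h₂⟩ | ⟨h₁, h₂⟩
      · exact .inl (ih.trans hzw)
      · exact .inr (.inl ⟨h₁, h₂.trans hzw⟩)
      · exact .inr (.inr ⟨h₁, h₂.trans hzw⟩)

theorem Reachable.eq_of_forall_notMem (hx : ∀ e ∈ F, x ∉ e) (h : Reachable F x y) : y = x := by
  rcases Relation.ReflTransGen.cases_head h with rfl | ⟨z, hxz, -⟩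
  · rfl
  · exact absurd (Sym2.mem_mk_left x z) (hx _ hxz)

def reachableSetoid (F : Multiset (Sym2 α)) : Setoid α where
  r := Reachable F
  iseqv := ⟨fun _ => .refl, Reachable.symm, Relation.ReflTransGen.trans⟩

noncomputable def numComponents (F : Multiset (Sym2 α)) : ℕ :=
  Nat.card (Quotient (reachableSetoid F))

theorem numComponents_eq_one_iff [Nonempty α] :
    numComponents F = 1 ↔ ∀ x y, Reachable F x y := by
  rw [numComponents, Nat.card_eq_one_iff_unique, and_iff_left ⟨⟦Classical.arbitrary α⟧⟩]
  refine ⟨fun _ x y => Quotient.exact (Subsingleton.elim (Quotient.mk (reachableSetoid F) x) ⟦y⟧),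
    fun h => ⟨?_⟩⟩
  rintro ⟨x⟩ ⟨y⟩
  exact Quotient.sound (h x y)

theorem Connected.numComponents_eq_one {G : Multigraph α} (hG : G.Connected) :
    numComponents G.edges = 1 :=
  have := hG.1
  numComponents_eq_one_iff.2 hG.2

theorem connected_of_numComponents_eq_one [Nonempty α] {G : Multigraph α}
    (hG : numComponents G.edges = 1) : G.Connected :=
  ⟨inferInstance, numComponents_eq_one_iff.1 hG⟩

theorem Reachable.of_cons_of_not_reachable (h : Reachable (s(a, b) ::ₘ F) x y)
    (hx : ¬Reachable F x b) (hy : ¬Reachable F y b) : Reachable F x y := by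
  rcases h.of_cons with h | ⟨-, h⟩ | ⟨h, -⟩
  exacts [h, absurd h.symm hy, absurd h hx]

theorem reachable_cons_iff_of_reachable (hab : Reachable F a b) :
    Reachable (s(a, b) ::ₘ F) x y ↔ Reachable F x y := by
  refine ⟨fun h => ?_, .mono (Multiset.le_cons_self F _)⟩
  rcases h.of_cons with h | ⟨h₁, h₂⟩ | ⟨h₁, h₂⟩
  exacts [h, h₁.trans (hab.trans h₂), h₁.trans (hab.symm.trans h₂)]

theorem numComponents_cons_of_reachable (hab : Reachable F a b) :
    numComponents (s(a, b) ::ₘ F) = numComponents F :=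
  congrArg (fun r => Nat.card (Quotient r))
    (Setoid.ext fun _ _ => reachable_cons_iff_of_reachable hab)

theorem numComponents_erase_of_reachable [DecidableEq α] (hr : s(a, b) ∈ F)
    (h : Reachable (F.erase s(a, b)) a b) : numComponents (F.erase s(a, b)) = numComponents F := by
  conv_rhs => rw [← Multiset.cons_erase hr]
  exact (numComponents_cons_of_reachable h).symm

/-- Adding the edge `ab` merges the classes of `a` and `b` and nothing else. -/
def consComponentMap (a b : α) (F : Multiset (Sym2 α)) :
    {q : Quotient (reachableSetoid F) // q ≠ ⟦b⟧} → Quotient (reachableSetoid (s(a, b) ::ₘ F)) :=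
  fun q => Quotient.map id (fun _ _ => Reachable.mono (Multiset.le_cons_self F _)) q.1

theorem consComponentMap_injective (a b : α) (F : Multiset (Sym2 α)) :
    Function.Injective (consComponentMap a b F) := by
  rintro ⟨⟨x⟩, hx⟩ ⟨⟨y⟩, hy⟩ hxy
  exact Subtype.ext <| Quotient.sound <| (Quotient.exact hxy).of_cons_of_not_reachable
    (fun h => hx (Quotient.sound h)) (fun h => hy (Quotient.sound h))

theorem consComponentMap_surjective (hab : ¬Reachable F a b) :
    Function.Surjective (consComponentMap a b F) := by
  rintro ⟨x⟩
  by_cases hx : Reachable F x b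
  · refine ⟨⟨⟦a⟧, fun h => hab (Quotient.exact h)⟩, Quotient.sound ?_⟩
    exact Reachable.symm <| (hx.mono (Multiset.le_cons_self F _)).trans
      (reachable_of_mem (Multiset.mem_cons_self _ _)).symm
  · exact ⟨⟨⟦x⟧, fun h => hx (Quotient.exact h)⟩, rfl⟩

variable [Finite α]

theorem numComponents_le_of_le (hF : F ≤ F') : numComponents F' ≤ numComponents F :=
  Nat.card_le_card_of_surjective (Quotient.map id fun _ _ => Reachable.mono hF) <| by
    rintro ⟨x⟩
    exact ⟨⟦x⟧, rfl⟩

theorem numComponents_le_cons_add_one (a b : α) (F : Multiset (Sym2 α)) :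
    numComponents F ≤ numComponents (s(a, b) ::ₘ F) + 1 := by
  rw [numComponents, ← Nat.card_subtype_ne_add_one ⟦b⟧]
  exact Nat.add_le_add_right (Nat.card_le_card_of_injective _ (consComponentMap_injective a b F)) 1

theorem numComponents_cons_add_one (hab : ¬Reachable F a b) :
    numComponents (s(a, b) ::ₘ F) + 1 = numComponents F := by
  rw [numComponents, numComponents, ← Nat.card_congr (Equiv.ofBijective _
    ⟨consComponentMap_injective a b F, consComponentMap_surjective hab⟩)]
  exact Nat.card_subtype_ne_add_one _

end Components

section EdgeMultisets

variable {α : Type} [Finite α] {C C' D : Multiset (Sym2 α)}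

theorem numComponents_le_add_card (C D : Multiset (Sym2 α)) :
    numComponents C ≤ numComponents (C + D) + Multiset.card D := by
  induction D using Multiset.induction generalizing C with
  | empty => simp
  | cons r D ih =>
    induction r using Sym2.ind with
    | _ a b =>
      have := numComponents_le_cons_add_one a b C
      have := ih (s(a, b) ::ₘ C)
      rw [Multiset.cons_add, ← Multiset.add_cons] at this
      rw [Multiset.card_cons]
      omega

theorem numComponents_add_add_le (h : C ≤ C') (D : Multiset (Sym2 α)) :
    numComponents (C + D) + numComponents C' ≤ numComponents (C' + D) + numComponents C := by
  induction D using Multiset.induction generalizing C C' with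
  | empty => simp [Nat.add_comm]
  | cons r D ih =>
    induction r using Sym2.ind with
    | _ a b =>
      have := ih (Multiset.cons_le_cons s(a, b) h)
      have : numComponents (s(a, b) ::ₘ C) + numComponents C' ≤
          numComponents (s(a, b) ::ₘ C') + numComponents C := by
        by_cases hab : Reachable C a b
        · rw [numComponents_cons_of_reachable hab, numComponents_cons_of_reachable (hab.mono h)]
          omega
        · have := numComponents_cons_add_one hab
          have := numComponents_le_cons_add_one a b C'
          omega
      simp only [Multiset.add_cons, ← Multiset.cons_add] at *
      omega

variable [DecidableEq α]

theorem numComponents_sub_le (F D : Multiset (Sym2 α)) :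
    numComponents (F - D) ≤ numComponents F + Multiset.card D :=
  (numComponents_le_add_card _ D).trans <|
    Nat.add_le_add_right (numComponents_le_of_le (Multiset.le_sub_add)) _

theorem numComponents_erase_le (F : Multiset (Sym2 α)) (r : Sym2 α) :
    numComponents (F.erase r) ≤ numComponents F + 1 := by
  simpa [← Multiset.sub_singleton] using numComponents_sub_le F {r}

theorem numComponents_eq_add_card_of_bridges
    (hD : ∀ a b, s(a, b) ∈ D → ¬Reachable ((C + D).erase s(a, b)) a b) :
    numComponents C = numComponents (C + D) + Multiset.card D := by
  induction D using Multiset.induction with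
  | empty => simp
  | cons r D ih =>
    induction r using Sym2.ind with
    | _ a b =>
      have hab := hD a b (Multiset.mem_cons_self _ _)
      rw [Multiset.add_cons, Multiset.erase_cons_head] at hab
      rw [ih fun a' b' h h' => hD a' b' (Multiset.mem_cons_of_mem h) (h'.mono ?_),
        Multiset.add_cons, ← numComponents_cons_add_one hab, Multiset.card_cons]
      · omega
      · rw [Multiset.add_cons]
        exact Multiset.erase_le_erase _ (Multiset.le_cons_self _ _)

end EdgeMultisets

section CoRank

variable {α : Type} [DecidableEq α] {E X Y : Multiset (Sym2 α)}

/-- The rank function `X ↦ |X| + r(E - X) - r(E)` of the cographic matroid of `E`, where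
`r(F) = |α| - c(F)` is the rank function of the graphic matroid. -/
noncomputable def coRank (E X : Multiset (Sym2 α)) : ℕ :=
  Multiset.card X + numComponents E - numComponents (E - X)

theorem coRank_zero (E : Multiset (Sym2 α)) : coRank E 0 = 0 := by
  simp [coRank]

variable [Finite α]

theorem coRank_add_numComponents_sub (E X : Multiset (Sym2 α)) :
    coRank E X + numComponents (E - X) = Multiset.card X + numComponents E := by
  have := numComponents_sub_le E X
  unfold coRank
  omega

theorem coRank_mono (hXY : X ≤ Y) (hY : Y ≤ E) : coRank E X ≤ coRank E Y := by
  have hsub : E - X = E - Y + (Y - X) := by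
    ext r
    have := Multiset.le_iff_count.1 hXY r
    have := Multiset.le_iff_count.1 hY r
    simp only [Multiset.count_sub, Multiset.count_add]
    omega
  have := numComponents_le_add_card (E - Y) (Y - X)
  have := coRank_add_numComponents_sub E X
  have := coRank_add_numComponents_sub E Y
  have := Multiset.card_le_card hXY
  rw [← hsub, Multiset.card_sub hXY] at *
  omega

theorem coRank_union_add_coRank_inter_le (hX : X ≤ E) (hY : Y ≤ E) :
    coRank E (X ∪ Y) + coRank E (X ∩ Y) ≤ coRank E X + coRank E Y := by
  -- Beyond `N`, the complements of `X`, `Y` and `X ∩ Y` contain `Y - X`, `X - Y` and both.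
  obtain ⟨N, hN⟩ : ∃ N, N = E - (X ∪ Y) := ⟨_, rfl⟩
  have hcount (r : Sym2 α) : X.count r ≤ E.count r ∧ Y.count r ≤ E.count r :=
    ⟨Multiset.le_iff_count.1 hX r, Multiset.le_iff_count.1 hY r⟩
  have hX' : E - X = N + (Y - X) := by
    ext r
    have := hcount r
    simp only [hN, Multiset.count_sub, Multiset.count_add, Multiset.count_union]
    omega
  have hY' : E - Y = N + (X - Y) := by
    ext r
    have := hcount r
    simp only [hN, Multiset.count_sub, Multiset.count_add, Multiset.count_union]
    omega
  have hXY' : E - X ∩ Y = N + (Y - X) + (X - Y) := by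
    ext r
    have := hcount r
    simp only [hN, Multiset.count_sub, Multiset.count_add, Multiset.count_union,
      Multiset.count_inter]
    omega
  have hsuper := numComponents_add_add_le (Multiset.le_add_right N (Y - X)) (X - Y)
  have hcard := congrArg Multiset.card (Multiset.union_add_inter X Y)
  rw [Multiset.card_add, Multiset.card_add] at hcard
  have hunion := coRank_add_numComponents_sub E (X ∪ Y)
  have hinter := coRank_add_numComponents_sub E (X ∩ Y)
  have := coRank_add_numComponents_sub E X
  have := coRank_add_numComponents_sub E Y
  rw [← hN] at hunion
  rw [hX', hY', hXY'] at *
  omega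

end CoRank

section EdgesMeeting

open Classical

variable {α : Type} {E : Multiset (Sym2 α)} {S A B : Set α} {r : Sym2 α}

noncomputable def edgesMeeting (E : Multiset (Sym2 α)) (S : Set α) : Multiset (Sym2 α) :=
  E.filter fun e => ∃ x ∈ e, x ∈ S

theorem mem_edgesMeeting : r ∈ edgesMeeting E S ↔ r ∈ E ∧ ∃ x ∈ r, x ∈ S :=
  Multiset.mem_filter

theorem edgesMeeting_le (E : Multiset (Sym2 α)) (S : Set α) : edgesMeeting E S ≤ E :=
  Multiset.filter_le _ _

theorem edgesMeeting_mono (h : A ⊆ B) : edgesMeeting E A ≤ edgesMeeting E B :=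
  Multiset.monotone_filter_right _ fun _ ⟨x, hx, hA⟩ => ⟨x, hx, h hA⟩

theorem edgesMeeting_empty (E : Multiset (Sym2 α)) : edgesMeeting E ∅ = 0 :=
  Multiset.filter_eq_nil.2 fun _ _ ⟨_, _, h⟩ => h

theorem edgesMeeting_map {W : Type} (φ : W → α) (F : Multiset (Sym2 W)) (S : Set α) :
    edgesMeeting (F.map (Sym2.map φ)) S = (edgesMeeting F (φ ⁻¹' S)).map (Sym2.map φ) := by
  rw [edgesMeeting, edgesMeeting, Multiset.filter_map]
  congr 1
  refine Multiset.filter_congr fun e _ => ?_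
  simp [Sym2.mem_map]

variable [DecidableEq α]

theorem count_edgesMeeting (E : Multiset (Sym2 α)) (S : Set α) (r : Sym2 α) :
    (edgesMeeting E S).count r = if ∃ x ∈ r, x ∈ S then E.count r else 0 :=
  Multiset.count_filter

theorem count_sub_edgesMeeting (E : Multiset (Sym2 α)) (S : Set α) (r : Sym2 α) :
    (E - edgesMeeting E S).count r = if ∃ x ∈ r, x ∈ S then 0 else E.count r := by
  rw [Multiset.count_sub, count_edgesMeeting]
  split_ifs <;> simp

theorem mem_sub_edgesMeeting : r ∈ E - edgesMeeting E S ↔ r ∈ E ∧ ¬∃ x ∈ r, x ∈ S := by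
  rw [← Multiset.count_pos, ← Multiset.count_pos, count_sub_edgesMeeting]
  split_ifs <;> simp_all

theorem edgesMeeting_union_le (E : Multiset (Sym2 α)) (A B : Set α) :
    edgesMeeting E (A ∪ B) ≤ edgesMeeting E A ∪ edgesMeeting E B := by
  refine Multiset.le_iff_count.2 fun r => ?_
  simp only [Multiset.count_union, count_edgesMeeting, Set.mem_union]
  split_ifs <;> grind

theorem edgesMeeting_inter_le (E : Multiset (Sym2 α)) (A B : Set α) :
    edgesMeeting E (A ∩ B) ≤ edgesMeeting E A ∩ edgesMeeting E B :=
  Multiset.le_inter (edgesMeeting_mono Set.inter_subset_left)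
    (edgesMeeting_mono Set.inter_subset_right)

theorem edgesMeeting_erase (E : Multiset (Sym2 α)) (S : Set α) (r : Sym2 α) :
    edgesMeeting (E.erase r) S = (edgesMeeting E S).erase r := by
  ext e
  by_cases he : e = r
  · subst he
    simp only [count_edgesMeeting, Multiset.count_erase_self]
    split_ifs <;> simp
  · simp only [count_edgesMeeting, Multiset.count_erase_of_ne he]

theorem erase_sub_edgesMeeting_of_mem (hr : r ∈ edgesMeeting E S) :
    E.erase r - edgesMeeting (E.erase r) S = E - edgesMeeting E S := by
  rw [edgesMeeting_erase, ← Multiset.sub_singleton, ← Multiset.sub_singleton,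
    tsub_tsub_tsub_cancel_right (Multiset.singleton_le.2 hr)]

theorem erase_sub_edgesMeeting_of_notMem (hr : r ∉ edgesMeeting E S) :
    E.erase r - edgesMeeting (E.erase r) S = (E - edgesMeeting E S).erase r := by
  rw [edgesMeeting_erase, Multiset.erase_of_notMem hr, ← Multiset.sub_singleton,
    ← Multiset.sub_singleton, tsub_right_comm]

end EdgesMeeting

section SplitRank

variable {α : Type} [DecidableEq α] {E : Multiset (Sym2 α)} {S A B : Set α}

noncomputable def splitRank (E : Multiset (Sym2 α)) (S : Set α) : ℕ :=
  coRank E (edgesMeeting E S)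

theorem splitRank_empty (E : Multiset (Sym2 α)) : splitRank E ∅ = 0 := by
  rw [splitRank, edgesMeeting_empty, coRank_zero]

variable [Finite α]

theorem splitRank_add_numComponents (E : Multiset (Sym2 α)) (S : Set α) :
    splitRank E S + numComponents (E - edgesMeeting E S) =
      Multiset.card (edgesMeeting E S) + numComponents E :=
  coRank_add_numComponents_sub _ _

theorem splitRank_mono (h : A ⊆ B) : splitRank E A ≤ splitRank E B :=
  coRank_mono (edgesMeeting_mono h) (edgesMeeting_le _ _)

theorem splitRank_union_add_splitRank_inter_le (E : Multiset (Sym2 α)) (A B : Set α) :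
    splitRank E (A ∪ B) + splitRank E (A ∩ B) ≤ splitRank E A + splitRank E B :=
  calc splitRank E (A ∪ B) + splitRank E (A ∩ B)
      ≤ coRank E (edgesMeeting E A ∪ edgesMeeting E B) +
          coRank E (edgesMeeting E A ∩ edgesMeeting E B) :=
        add_le_add
          (coRank_mono (edgesMeeting_union_le E A B)
            (Multiset.union_le (edgesMeeting_le E A) (edgesMeeting_le E B)))
          (coRank_mono (edgesMeeting_inter_le E A B)
            (Multiset.inter_le_left.trans (edgesMeeting_le E A)))
    _ ≤ splitRank E A + splitRank E B :=
        coRank_union_add_coRank_inter_le (edgesMeeting_le E A) (edgesMeeting_le E B)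

theorem splitRank_le_splitRank_erase_add_one (E : Multiset (Sym2 α)) (S : Set α) (r : Sym2 α) :
    splitRank E S ≤ splitRank (E.erase r) S + 1 := by
  have h := splitRank_add_numComponents E S
  have h' := splitRank_add_numComponents (E.erase r) S
  have := numComponents_le_of_le (Multiset.erase_le r E)
  by_cases hr : r ∈ edgesMeeting E S
  · rw [erase_sub_edgesMeeting_of_mem hr, edgesMeeting_erase] at h'
    have := Multiset.card_erase_add_one hr
    omega
  · rw [erase_sub_edgesMeeting_of_notMem hr, edgesMeeting_erase,
      Multiset.erase_of_notMem hr] at h'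
    have := numComponents_erase_le (E - edgesMeeting E S) r
    omega

theorem splitRank_erase_of_reachable {a b : α} (hr : s(a, b) ∈ E - edgesMeeting E S)
    (h : Reachable ((E - edgesMeeting E S).erase s(a, b)) a b) :
    splitRank (E.erase s(a, b)) S = splitRank E S := by
  have hrX : s(a, b) ∉ edgesMeeting E S := fun h =>
    (mem_sub_edgesMeeting.1 hr).2 (mem_edgesMeeting.1 h).2
  have h₁ := splitRank_add_numComponents E S
  have h₂ := splitRank_add_numComponents (E.erase s(a, b)) S
  rw [erase_sub_edgesMeeting_of_notMem hrX, edgesMeeting_erase, Multiset.erase_of_notMem hrX,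
    numComponents_erase_of_reachable hr h, numComponents_erase_of_reachable
      (Multiset.mem_of_le (Multiset.sub_le_self _ _) hr)
      (h.mono (Multiset.erase_le_erase _ (Multiset.sub_le_self _ _)))] at h₂
  omega

/-- Deleting these bridges at `v` adds one component per edge, which exactly compensates for
their count in `edgesMeeting E (insert v S)`. -/
theorem splitRank_insert_of_bridges {v : α}
    (hv : ∀ u, s(v, u) ∈ E - edgesMeeting E S →
      ¬Reachable ((E - edgesMeeting E S).erase s(v, u)) v u) :
    splitRank E (insert v S) = splitRank E S := by
  set D := (E - edgesMeeting E S).filter (v ∈ ·)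
  set C := (E - edgesMeeting E S).filter (v ∉ ·)
  have hC : E - edgesMeeting E (insert v S) = C := by
    ext e
    simp only [C, count_sub_edgesMeeting, Multiset.count_filter, Set.mem_insert_iff]
    split_ifs <;> grind
  have hX : edgesMeeting E (insert v S) = edgesMeeting E S + D := by
    ext e
    simp only [D, count_sub_edgesMeeting, count_edgesMeeting, Multiset.count_filter,
      Multiset.count_add, Set.mem_insert_iff]
    split_ifs <;> grind
  have hCD : C + D = E - edgesMeeting E S := by
    rw [add_comm]
    exact Multiset.filter_add_not _ _
  have hbridges : numComponents C = numComponents (E - edgesMeeting E S) + Multiset.card D := by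
    rw [← hCD]
    refine numComponents_eq_add_card_of_bridges fun a b hab => ?_
    rw [hCD]
    obtain ⟨habY, hvab⟩ := Multiset.mem_filter.1 hab
    rcases Sym2.mem_iff.1 hvab with rfl | rfl
    · exact hv b habY
    · rw [Sym2.eq_swap] at habY ⊢
      exact fun h => hv a habY h.symm
  have h₁ := splitRank_add_numComponents E S
  have h₂ := splitRank_add_numComponents E (insert v S)
  rw [hC, hX, Multiset.card_add, hbridges] at h₂
  omega

end SplitRank

section Maps

variable {α W : Type} {φ : W → α} {F : Multiset (Sym2 W)} {x y : W}

theorem IsHomImage.map_edges {G : Multigraph α} {H : Multigraph W} (h : IsHomImage G H φ) :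
    H.edges.map (Sym2.map φ) = G.edges := by
  classical
  refine Multiset.ext.2 fun e => ?_
  induction e using Sym2.ind with
  | _ u v => exact (h.2 u v).symm

theorem isHomImage_of_map_edges {G : Multigraph α} {H : Multigraph W}
    (hφ : Function.Surjective φ) (h : H.edges.map (Sym2.map φ) = G.edges) : IsHomImage G H φ :=
  ⟨hφ, fun _ _ => by rw [h]⟩

theorem Reachable.map (φ : W → α) (h : Reachable F x y) :
    Reachable (F.map (Sym2.map φ)) (φ x) (φ y) :=
  Relation.ReflTransGen.lift φ (fun _ _ hab => Multiset.mem_map_of_mem (Sym2.map φ) hab) _ _ h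

/-- Vertices of `S` and of `φ ⁻¹' S` are isolated, and every other component of the image is the
image of a component of `F`. -/
theorem ncard_preimage_add_numComponents_map_le [Finite W] [Finite α]
    (hφ : Function.Surjective φ) {S : Set α} (hF : ∀ e ∈ F, ∀ w ∈ e, φ w ∉ S) :
    (φ ⁻¹' S).ncard + numComponents (F.map (Sym2.map φ)) ≤ numComponents F + S.ncard := by
  let ψ : Quotient (reachableSetoid F) → Quotient (reachableSetoid (F.map (Sym2.map φ))) :=
    Quotient.map φ fun _ _ h => h.map φ
  have hψ : Function.Surjective ψ := by
    rintro ⟨v⟩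
    obtain ⟨w, rfl⟩ := hφ v
    exact ⟨⟦w⟧, rfl⟩
  let ι : S → Quotient (reachableSetoid (F.map (Sym2.map φ))) := fun v => ⟦v.1⟧
  have hι : Function.Injective ι := by
    rintro ⟨v, hv⟩ ⟨v', _⟩ h
    refine Subtype.ext ((Quotient.exact h).eq_of_forall_notMem fun e he hve => ?_).symm
    obtain ⟨e', he', rfl⟩ := Multiset.mem_map.1 he
    obtain ⟨w, hw, rfl⟩ := Sym2.mem_map.1 hve
    exact hF e' he' w hw hv
  let j : φ ⁻¹' S ⊕ {q // q ∉ Set.range ι} → Quotient (reachableSetoid F) :=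
    Sum.elim (fun w => ⟦w.1⟧) (fun q => Function.surjInv hψ q.1)
  have hj : Function.Injective j := by
    refine Function.Injective.sumElim ?_ ?_ ?_
    · rintro ⟨w, hw⟩ ⟨w', _⟩ h
      exact Subtype.ext
        ((Quotient.exact h).eq_of_forall_notMem fun e he hwe => hF e he w hwe hw).symm
    · exact (Function.injective_surjInv hψ).comp Subtype.val_injective
    · rintro ⟨w, hw⟩ ⟨q, hq⟩ h
      refine hq ⟨⟨φ w, hw⟩, ?_⟩
      rw [← Function.surjInv_eq hψ q]
      exact congrArg ψ h
  have hcard := Nat.card_add_card_compl_range hι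
  have := Nat.card_le_card_of_injective j hj
  rw [Nat.card_sum] at this
  rw [← Nat.card_coe_set_eq, ← Nat.card_coe_set_eq, numComponents, numComponents]
  omega

end Maps

section Feasibility

variable {V : Type} {μ : V → ℕ}

theorem feasibleSplit_zero [Finite V] {G : Multigraph V} (hG : G.Connected) : FeasibleSplit G 0 :=
  ⟨V, inferInstance, G, id, hG, isHomImage_of_map_edges Function.surjective_id (by simp),
    fun v => by simp⟩

/-- Split off a new copy of `v`, attached by the new edge to some copy of `u`. -/
theorem _root_.FeasibleSplit.cons [DecidableEq V] {F : Multiset (Sym2 V)}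
    (h : FeasibleSplit ⟨F⟩ μ) (v u : V) :
    FeasibleSplit ⟨s(v, u) ::ₘ F⟩ (Function.update μ v (μ v + 1)) := by
  obtain ⟨W, _, H, φ, hH, hφ, hfiber⟩ := h
  obtain ⟨w, rfl⟩ := hφ.1 u
  let φ' : W ⊕ Unit → V := Sum.elim φ fun _ => v
  let H' : Multigraph (W ⊕ Unit) := ⟨s(.inr (), .inl w) ::ₘ H.edges.map (Sym2.map .inl)⟩
  have hreach : ∀ x, Relation.ReflTransGen H'.Adj x (.inr ()) := by
    have hinl : ∀ a b, H.Adj a b → H'.Adj (.inl a) (.inl b) := fun a b hab =>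
      Multiset.mem_cons_of_mem (Multiset.mem_map_of_mem (Sym2.map Sum.inl) hab)
    rintro (a | ⟨⟩)
    · exact (Relation.ReflTransGen.lift _ hinl _ _ (hH.2 a w)).trans
        (reachable_of_mem (Multiset.mem_cons_self _ _)).symm
    · exact .refl
  refine ⟨W ⊕ Unit, inferInstance, H', φ', ⟨⟨.inr ()⟩, fun x y => (hreach x).trans ?_⟩,
    isHomImage_of_map_edges (fun x => ?_) ?_, fun x => ?_⟩
  · exact Reachable.symm (hreach y)
  · obtain ⟨a, rfl⟩ := hφ.1 x
    exact ⟨.inl a, rfl⟩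
  · simp [H', φ', Multiset.map_map, Function.comp_def, Sym2.map_map, hφ.map_edges]
  · rw [Nat.card_congr Equiv.subtypeSum, Nat.card_sum]
    change Nat.card (φ ⁻¹' {x}) + _ = _
    rw [hfiber x]
    by_cases hx : x = v
    · subst hx
      simp [φ']
    · simp [φ', hx, Ne.symm hx]

variable [Finite V] [DecidableEq V]

theorem _root_.FeasibleSplit.finsum_le_splitRank {G : Multigraph V} (h : FeasibleSplit G μ)
    (S : Set V) :
    ∑ᶠ v ∈ S, μ v ≤ splitRank G.edges S := by
  classical
  obtain ⟨W, _, H, φ, hH, hφ, hfiber⟩ := h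
  set X := edgesMeeting H.edges (φ ⁻¹' S)
  have hX : X.map (Sym2.map φ) = edgesMeeting G.edges S := by
    rw [← hφ.map_edges, edgesMeeting_map]
  have hrest : (H.edges - X).map (Sym2.map φ) = G.edges - edgesMeeting G.edges S := by
    rw [← hX, ← hφ.map_edges]
    exact (map_tsub_of_le (Multiset.mapAddMonoidHom _) _ _ (edgesMeeting_le _ _)).symm
  have hcomponents := ncard_preimage_add_numComponents_map_le hφ.1 (F := H.edges - X) (S := S)
    fun e he w hwe hw => (mem_sub_edgesMeeting.1 he).2 ⟨w, hwe, hw⟩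
  rw [hrest] at hcomponents
  have hpreimage : (φ ⁻¹' S).ncard = ∑ᶠ v ∈ S, μ v + S.ncard := by
    rw [Set.ncard_preimage_eq_finsum_mem, ← finsum_one, ← finsum_mem_add_distrib S.toFinite]
    exact finsum_mem_congr rfl fun v _ => by rw [← Nat.card_coe_set_eq, hfiber]
  have hcard : Multiset.card X = Multiset.card (edgesMeeting G.edges S) := by
    rw [← hX, Multiset.card_map]
  have hpos : 0 < numComponents G.edges :=
    have : Nonempty (Quotient (reachableSetoid G.edges)) := ⟨⟦φ (Classical.choice hH.1)⟧⟩
    Nat.card_pos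
  have := numComponents_sub_le H.edges X
  have := hH.numComponents_eq_one
  have := splitRank_add_numComponents G.edges S
  omega

/-- A set that is tight for `μ` and avoids `v` lies in `S₀`, so the edge `vu`, which avoids `S₀`
and is no bridge there, does not lower its rank when deleted. -/
theorem finsum_update_le_splitRank_erase {E : Multiset (Sym2 V)} {S₀ : Set V} {v u : V}
    (hμ : ∀ S, ∑ᶠ x ∈ S, μ x ≤ splitRank E S) (hv : μ v ≠ 0)
    (hS₀ : ∀ S, v ∉ S → ∑ᶠ x ∈ S, μ x = splitRank E S → S ⊆ S₀)
    (hr : s(v, u) ∈ E - edgesMeeting E S₀)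
    (hreach : Reachable ((E - edgesMeeting E S₀).erase s(v, u)) v u) (S : Set V) :
    ∑ᶠ x ∈ S, Function.update μ v (μ v - 1) x ≤ splitRank (E.erase s(v, u)) S := by
  have hdrop := splitRank_le_splitRank_erase_add_one E S s(v, u)
  have := hμ S
  by_cases hvS : v ∈ S
  · have := finsum_mem_update_add_of_mem S.toFinite hvS μ (μ v - 1)
    omega
  rw [finsum_mem_update_of_notMem hvS]
  by_cases htight : ∑ᶠ x ∈ S, μ x = splitRank E S
  · have hle : E - edgesMeeting E S₀ ≤ E - edgesMeeting E S :=
      tsub_le_tsub_left (edgesMeeting_mono (hS₀ S hvS htight)) E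
    rw [splitRank_erase_of_reachable (Multiset.mem_of_le hle hr)
      (hreach.mono (Multiset.erase_le_erase _ hle))]
    exact htight.le
  · omega

theorem feasibleSplit_of_forall_finsum_le_splitRank {G : Multigraph V} (hG : G.Connected)
    (hμ : ∀ S, ∑ᶠ x ∈ S, μ x ≤ splitRank G.edges S) : FeasibleSplit G μ := by
  induction hn : ∑ᶠ x, μ x using Nat.strong_induction_on generalizing G μ with
  | _ n ih =>
  rcases eq_or_ne μ 0 with rfl | hμ₀
  · exact feasibleSplit_zero hG
  obtain ⟨v, hv⟩ : ∃ v, μ v ≠ 0 := Function.ne_iff.1 hμ₀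
  obtain ⟨S₀, hvS₀, hS₀, hmax⟩ := exists_max_tight_notMem
    (splitRank_union_add_splitRank_inter_le G.edges) (splitRank_empty G.edges) hμ v
  by_cases hbridges : ∀ u, s(v, u) ∈ G.edges - edgesMeeting G.edges S₀ →
      ¬Reachable ((G.edges - edgesMeeting G.edges S₀).erase s(v, u)) v u
  · have := hμ (insert v S₀)
    rw [finsum_mem_insert _ hvS₀ S₀.toFinite, splitRank_insert_of_bridges hbridges] at this
    omega
  push Not at hbridges
  obtain ⟨u, hr, hreach⟩ := hbridges
  have hrE := Multiset.mem_of_le (Multiset.sub_le_self _ _) hr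
  have := hG.1
  have hG' : Connected ⟨G.edges.erase s(v, u)⟩ := connected_of_numComponents_eq_one <| by
    rw [numComponents_erase_of_reachable hrE
      (hreach.mono (Multiset.erase_le_erase _ (Multiset.sub_le_self _ _))),
      hG.numComponents_eq_one]
  have hsum : ∑ᶠ x, Function.update μ v (μ v - 1) x < n := by
    have := finsum_mem_update_add_of_mem Set.finite_univ (Set.mem_univ v) μ (μ v - 1)
    simp only [finsum_mem_univ] at this
    omega
  have := (ih _ hsum hG' (finsum_update_le_splitRank_erase hμ hv hmax hr hreach) rfl).cons v u
  rwa [Function.update_idem, Function.update_self, Nat.sub_add_cancel (Nat.one_le_iff_ne_zero.2 hv),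
    Function.update_eq_self, Multiset.cons_erase hrE] at this

end Feasibility

end Multigraph

theorem feasibleSplit_polymatroid_general {V : Type} [Finite V]
    (G : Multigraph V) (hconn : Connected G) :
    ∃ f : Set V → ℕ, f ∅ = 0 ∧
      (∀ A B : Set V, f (A ∪ B) + f (A ∩ B) ≤ f A + f B) ∧
      (∀ A B : Set V, A ⊆ B → f A ≤ f B) ∧
      (∀ μ : V → ℕ, FeasibleSplit G μ ↔ ∀ S : Set V, (∑ᶠ v ∈ S, μ v) ≤ f S) := by
  classical
  exact ⟨splitRank G.edges, splitRank_empty G.edges, splitRank_union_add_splitRank_inter_le G.edges,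
    fun _ _ => splitRank_mono, fun _ => ⟨FeasibleSplit.finsum_le_splitRank,
      feasibleSplit_of_forall_finsum_le_splitRank hconn⟩⟩

/-- The feasible split vectors of a connected multigraph `G` are exactly the integral points
of a polymatroid: there is a normalized, submodular, monotone `f : 2^V → ℤ_{≥0}` such that
`μ` is a feasible split vector iff `Σ_{v ∈ S} μ(v) ≤ f(S)` for all `S ⊆ V`. -/
theorem feasibleSplit_polymatroid {V : Type} [Finite V]
    (hV : 2 ≤ Nat.card V)
    (G : Multigraph V) (hconn : Connected G) :
    ∃ f : Set V → ℕ, f ∅ = 0 ∧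
      (∀ A B : Set V, f (A ∪ B) + f (A ∩ B) ≤ f A + f B) ∧
      (∀ A B : Set V, A ⊆ B → f A ≤ f B) ∧
      (∀ μ : V → ℕ, FeasibleSplit G μ ↔ ∀ S : Set V, (∑ᶠ v ∈ S, μ v) ≤ f S) :=
  feasibleSplit_polymatroid_general G hconn
end
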